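/- Let q < 0, x₀ ∈ ℝ, v > 0, t₁ > 0 with x₀ + v t₁ < 0. Then the projection of the translated soliton φ₁(x) = e^{ixv} sech(x − x₀ − v t₁) onto the eigenstate satisfies the pointwise bound |Pφ₁(x)| ≤ C |q| e^{q|x|} ( e^{|q|(x₀ + v t₁)/2} + e^{(x₀ + v t₁)/2} ) for an absolute constant C. -/

import Mathlib

/-!
Bound `sech (y - a) ≤ 2 e^{-|y - a|}` with `a = x₀ + v t₁`. For `m = min |q| 1`, the triangle
inequality `|a| ≤ |y| + |y - a|` gives `e^{q|y| - |y - a|} ≤ e^{-m|a|/2} e^{-|y - a|/2}`: half of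
the decay of the soliton pays for the factor `e^{-m|a|/2}`, the other half is integrable with
integral `4`. Since `a < 0`, `e^{-m|a|/2} = e^{m a/2}` is one of the two exponentials of the bound.
-/

open Complex MeasureTheory

theorem integral_exp_neg_mul_abs {b : ℝ} (hb : 0 < b) :
    ∫ x : ℝ, Real.exp (-b * |x|) = 2 / b := by
  rw [integral_comp_abs (f := fun x => Real.exp (-b * x)), integral_exp_mul_Ioi (by linarith) 0]
  field_simp
  simp

theorem integrable_exp_neg_mul_abs {b : ℝ} (hb : 0 < b) :
    Integrable fun x : ℝ => Real.exp (-b * |x|) :=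
  .of_integral_ne_zero (by rw [integral_exp_neg_mul_abs hb]; positivity)

theorem inv_cosh_le_two_mul_exp_neg_abs (x : ℝ) : (Real.cosh x)⁻¹ ≤ 2 * Real.exp (-|x|) := by
  have h : Real.exp |x| / 2 ≤ Real.cosh x := by
    rw [Real.cosh_eq]; linarith [Real.exp_abs_le x]
  calc (Real.cosh x)⁻¹ ≤ (Real.exp |x| / 2)⁻¹ := inv_anti₀ (by positivity) h
    _ = 2 * Real.exp (-|x|) := by rw [Real.exp_neg]; field_simp

section SolitonTail

variable {m q : ℝ} (hm0 : 0 ≤ m) (hm1 : m ≤ 1) (hq : q ≤ -m) (a : ℝ)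
include hm0 hm1 hq

theorem mul_abs_sub_abs_sub_le (y : ℝ) :
    q * |y| - |y - a| ≤ -(m * |a|) / 2 - 1 / 2 * |y - a| := by
  have htri : |a| ≤ |y| + |y - a| := by simpa using abs_sub y (y - a)
  nlinarith [abs_nonneg y, abs_nonneg (y - a)]

theorem exp_mul_abs_mul_inv_cosh_sub_le (y : ℝ) :
    Real.exp (q * |y|) * (Real.cosh (y - a))⁻¹ ≤
      2 * Real.exp (-(m * |a|) / 2) * Real.exp (-(1 / 2) * |y - a|) :=
  calc Real.exp (q * |y|) * (Real.cosh (y - a))⁻¹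
      ≤ Real.exp (q * |y|) * (2 * Real.exp (-|y - a|)) := by
        gcongr; exact inv_cosh_le_two_mul_exp_neg_abs _
    _ = 2 * Real.exp (q * |y| - |y - a|) := by rw [Real.exp_sub, Real.exp_neg]; ring
    _ ≤ 2 * Real.exp (-(m * |a|) / 2 - 1 / 2 * |y - a|) := by
        gcongr 2 * Real.exp ?_; exact mul_abs_sub_abs_sub_le hm0 hm1 hq a y
    _ = 2 * Real.exp (-(m * |a|) / 2) * Real.exp (-(1 / 2) * |y - a|) := by
        rw [Real.exp_sub, neg_mul, Real.exp_neg]; ring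

theorem integral_exp_mul_abs_mul_inv_cosh_sub_le :
    ∫ y : ℝ, Real.exp (q * |y|) * (Real.cosh (y - a))⁻¹ ≤ 8 * Real.exp (-(m * |a|) / 2) := by
  have hdecay : Integrable fun y : ℝ => Real.exp (-(1 / 2) * |y - a|) :=
    (integrable_exp_neg_mul_abs one_half_pos).comp_sub_right a
  calc ∫ y : ℝ, Real.exp (q * |y|) * (Real.cosh (y - a))⁻¹
      ≤ ∫ y : ℝ, 2 * Real.exp (-(m * |a|) / 2) * Real.exp (-(1 / 2) * |y - a|) :=
        integral_mono_of_nonneg (.of_forall fun y => by positivity) (hdecay.const_mul _)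
          (.of_forall (exp_mul_abs_mul_inv_cosh_sub_le hm0 hm1 hq a))
    _ = 8 * Real.exp (-(m * |a|) / 2) := by
        rw [integral_const_mul,
          integral_sub_right_eq_self (fun y => Real.exp (-(1 / 2) * |y|)) a,
          integral_exp_neg_mul_abs one_half_pos]
        ring

end SolitonTail

theorem norm_integral_ofReal_mul_exp_mul_I_le (f g : ℝ → ℝ) (v : ℝ) :
    ‖∫ y : ℝ, (f y : ℂ) * (Complex.exp (I * y * v) * (g y : ℂ))‖ ≤ ∫ y : ℝ, |f y * g y| := by
  refine (norm_integral_le_integral_norm _).trans_eq (integral_congr_ae (.of_forall fun y => ?_))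
  have hphase : ‖Complex.exp (I * y * v)‖ = 1 := by
    rw [mul_assoc, ← ofReal_mul, norm_exp_I_mul_ofReal]
  simp only [norm_mul, hphase, norm_real, Real.norm_eq_abs, one_mul, abs_mul]

theorem exp_min_mul_le_exp_add_exp (b c t : ℝ) :
    Real.exp (min b c * t) ≤ Real.exp (b * t) + Real.exp (c * t) := by
  rcases min_choice b c with h | h <;> rw [h] <;>
    linarith [Real.exp_pos (b * t), Real.exp_pos (c * t)]

/-- Pointwise bound on the projection of the translated soliton
`φ₁(x) = e^{ixv} sech(x − x₀ − v t₁)` onto the eigenstate: for `q < 0` and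
`x₀ + v t₁ < 0`,
`|Pφ₁(x)| ≤ C |q| e^{q|x|} (e^{|q|(x₀ + v t₁)/2} + e^{(x₀ + v t₁)/2})`,
where `(Pφ)(x) = |q| e^{q|x|} ∫ e^{q|y|} φ(y) dy`. -/
theorem stmt_10 :
    ∃ C : ℝ, 0 < C ∧ ∀ q x₀ v t₁ : ℝ, q < 0 → 0 < v → 0 < t₁ → x₀ + v * t₁ < 0 →
      ∀ x : ℝ,
        ‖
            (((|q| * Real.exp (q * |x|) : ℝ) : ℂ) *
              ∫ y : ℝ, ((Real.exp (q * |y|) : ℝ) : ℂ) *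
                (Complex.exp (I * (y : ℂ) * (v : ℂ)) * ((Real.cosh (y - x₀ - v * t₁))⁻¹ : ℝ)))‖ ≤
          C * |q| * Real.exp (q * |x|) *
            (Real.exp (|q| * (x₀ + v * t₁) / 2) + Real.exp ((x₀ + v * t₁) / 2)) := by
  refine ⟨8, by norm_num, fun q x₀ v t₁ hq _ _ ha x => ?_⟩
  set a := x₀ + v * t₁
  set m := min |q| 1
  have hqm : q ≤ -m := by
    have hm : m ≤ |q| := min_le_left _ _
    rw [abs_of_neg hq] at hm; linarith
  have hintegral := calc
    ‖∫ y : ℝ, ((Real.exp (q * |y|) : ℝ) : ℂ) *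
        (Complex.exp (I * (y : ℂ) * (v : ℂ)) * ((Real.cosh (y - x₀ - v * t₁))⁻¹ : ℝ))‖
      ≤ ∫ y : ℝ, |Real.exp (q * |y|) * (Real.cosh (y - x₀ - v * t₁))⁻¹| :=
        norm_integral_ofReal_mul_exp_mul_I_le _ _ v
    _ = ∫ y : ℝ, Real.exp (q * |y|) * (Real.cosh (y - a))⁻¹ := by
        simp_rw [sub_sub]
        congr with y
        exact abs_of_nonneg (mul_nonneg (Real.exp_pos _).le (inv_nonneg.2 (Real.cosh_pos _).le))
    _ ≤ 8 * Real.exp (-(m * |a|) / 2) :=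
        integral_exp_mul_abs_mul_inv_cosh_sub_le (by positivity) (min_le_right _ _) hqm a
  have hsplit : Real.exp (-(m * |a|) / 2) ≤ Real.exp (|q| * a / 2) + Real.exp (a / 2) := by
    have hma : -(m * |a|) / 2 = m * (a / 2) := by rw [abs_of_neg ha]; ring
    simpa only [hma, one_mul, mul_div_assoc] using exp_min_mul_le_exp_add_exp |q| 1 (a / 2)
  rw [norm_mul, norm_real, Real.norm_of_nonneg (by positivity)]
  calc |q| * Real.exp (q * |x|) * ‖_‖
      ≤ |q| * Real.exp (q * |x|) * (8 * (Real.exp (|q| * a / 2) + Real.exp (a / 2))) := by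
        gcongr; exact hintegral.trans (by gcongr)
    _ = 8 * |q| * Real.exp (q * |x|) * (Real.exp (|q| * a / 2) + Real.exp (a / 2)) := by ring
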